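/- Let D = (E, s, t) be a demi-matroid with supplement D̄ = (E, s̄, t̄), s̄(X) = s(E) − s(E−X), t̄(X) = t(E) − t(E−X), and f harmonic of degree d. Then T(D̄, f; x, y) = (−1)^d (x−1)^{s(E)} (y−1)^{t(E)} T(D, f; x/(x−1), y/(y−1)). -/

import Mathlib

open Finset

variable {ι : Type*} [Fintype ι] [DecidableEq ι]

/-- `f` is harmonic of degree `d`. -/
def IsHarmonic (d : ℕ) (f : Finset ι → ℝ) : Prop :=
  ∀ Y : Finset ι, Y.card + 1 = d →
    ∑ Z ∈ Finset.univ.filter (fun Z : Finset ι => Z.card = d ∧ Y ⊆ Z), f Z = 0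

/-- The extension `f̃(X) = ∑_{Z ⊆ X, |Z| = d} f(Z)`. -/
def tilde (d : ℕ) (f : Finset ι → ℝ) (X : Finset ι) : ℝ :=
  ∑ Z ∈ X.powerset.filter (fun Z : Finset ι => Z.card = d), f Z

/-- A demi-matroid on ground set `E = univ` with integer-valued functions. -/
def IsDemimatroidN (s t : Finset ι → ℕ) : Prop :=
  (∀ ⦃X Y : Finset ι⦄, X ⊆ Y →
      (s X ≤ s Y ∧ s Y ≤ Y.card) ∧ (t X ≤ t Y ∧ t Y ≤ Y.card)) ∧
  (∀ X : Finset ι, ((Xᶜ.card : ℤ) - s Xᶜ = (t Finset.univ : ℤ) - t X))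

/-- The harmonic Tutte polynomial
`T(D, f; x, y) = ∑_{X ⊆ E} f̃(X) (x-1)^{s(E)-s(X)} (y-1)^{|X|-s(X)}`
of the demi-matroid whose first function is `s`. -/
def harmTutte (s : Finset ι → ℕ) (d : ℕ) (f : Finset ι → ℝ) (x y : ℝ) : ℝ :=
  ∑ X : Finset ι,
    tilde d f X * (x - 1) ^ (s Finset.univ - s X) * (y - 1) ^ (X.card - s X)

/-!
For harmonic `f` one has `f̃(E − X) = (−1)^d f̃(X)`. By inclusion–exclusion,
`f̃(E − X) = ∑_{W ⊆ X} (−1)^{|W|} ∑_{Z ⊇ W, |Z| = d} f(Z)`, and harmonicity kills every inner sum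
with `|W| < d`: summing the harmonic relations over the `Y ⊇ W` with `|Y| = d − 1` counts each such
`Z` exactly `d − |W|` times. Reindexing the Tutte sum of the supplement by `X ↦ E − X` then matches
it term by term with the right-hand side, the exponents agreeing by (D2).
-/

def supersetSum (d : ℕ) (f : Finset ι → ℝ) (W : Finset ι) : ℝ :=
  ∑ Z ∈ univ.filter (fun Z : Finset ι => Z.card = d ∧ W ⊆ Z), f Z

lemma card_filter_card_add_one_between {W Z : Finset ι} (hWZ : W ⊆ Z) :
    #(univ.filter fun Y : Finset ι => (Y.card + 1 = Z.card ∧ W ⊆ Y) ∧ Y ⊆ Z) = #(Z \ W) := by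
  symm
  refine card_bij (fun a _ => Z.erase a) ?_ ?_ ?_
  · intro a ha
    obtain ⟨haZ, haW⟩ := mem_sdiff.1 ha
    simp only [mem_filter, mem_univ, true_and]
    exact ⟨⟨card_erase_add_one haZ, subset_erase.2 ⟨hWZ, haW⟩⟩, erase_subset a Z⟩
  · intro a ha b hb hab
    exact erase_injOn Z (mem_sdiff.1 ha).1 (mem_sdiff.1 hb).1 hab
  · intro Y hY
    simp only [mem_filter, mem_univ, true_and] at hY
    obtain ⟨⟨hYcard, hWY⟩, hYZ⟩ := hY
    obtain ⟨a, haZ, haY⟩ := exists_of_ssubset (hYZ.ssubset_of_ne (by rintro rfl; omega))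
    refine ⟨a, mem_sdiff.2 ⟨haZ, fun haW => haY (hWY haW)⟩, ?_⟩
    refine (eq_of_subset_of_card_le (subset_erase.2 ⟨hYZ, haY⟩) ?_).symm
    rw [card_erase_of_mem haZ]
    omega

lemma sum_supersetSum_of_card_add_one (d : ℕ) (f : Finset ι → ℝ) (W : Finset ι) :
    ∑ Y ∈ univ.filter (fun Y : Finset ι => Y.card + 1 = d ∧ W ⊆ Y), supersetSum d f Y
      = (d - #W : ℕ) * supersetSum d f W := by
  unfold supersetSum
  rw [sum_comm' (t' := univ.filter fun Z : Finset ι => Z.card = d ∧ W ⊆ Z)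
    (s' := fun Z => univ.filter fun Y : Finset ι => (Y.card + 1 = Z.card ∧ W ⊆ Y) ∧ Y ⊆ Z), mul_sum]
  · refine sum_congr rfl fun Z hZ => ?_
    obtain ⟨hZd, hWZ⟩ := (mem_filter.1 hZ).2
    rw [sum_const, card_filter_card_add_one_between hWZ, card_sdiff_of_subset hWZ, hZd, nsmul_eq_mul]
  · intro Y Z
    simp only [mem_filter, mem_univ, true_and]
    constructor
    · rintro ⟨⟨hY, hWY⟩, rfl, hYZ⟩
      exact ⟨⟨⟨hY, hWY⟩, hYZ⟩, rfl, hWY.trans hYZ⟩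
    · rintro ⟨⟨⟨hY, hWY⟩, hYZ⟩, rfl, -⟩
      exact ⟨⟨hY, hWY⟩, rfl, hYZ⟩

lemma IsHarmonic.supersetSum_eq {d : ℕ} {f : Finset ι → ℝ} (hf : IsHarmonic d f) (W : Finset ι) :
    supersetSum d f W = if #W = d then f W else 0 := by
  rcases lt_trichotomy #W d with hlt | rfl | hgt
  · have hsum := sum_supersetSum_of_card_add_one d f W
    have hcovers : ∀ Y ∈ univ.filter (fun Y : Finset ι => Y.card + 1 = d ∧ W ⊆ Y),
        supersetSum d f Y = 0 := fun Y hY => hf Y (mem_filter.1 hY).2.1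
    rw [sum_eq_zero hcovers] at hsum
    have hpos : ((d - #W : ℕ) : ℝ) ≠ 0 := by norm_cast; omega
    rw [if_neg hlt.ne]
    exact (mul_eq_zero.1 hsum.symm).resolve_left hpos
  · have hsingleton : univ.filter (fun Z : Finset ι => #Z = #W ∧ W ⊆ Z) = {W} := by
      ext Z
      simp only [mem_filter, mem_univ, true_and, mem_singleton]
      constructor
      · rintro ⟨hcard, hWZ⟩
        exact (eq_of_subset_of_card_le hWZ hcard.le).symm
      · rintro rfl
        exact ⟨rfl, Subset.refl Z⟩
    rw [supersetSum, hsingleton, sum_singleton, if_pos rfl]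
  · rw [if_neg hgt.ne', supersetSum, sum_eq_zero]
    rintro Z hZ
    obtain ⟨hZd, hWZ⟩ := (mem_filter.1 hZ).2
    exact absurd (card_le_card hWZ) (by omega)

lemma tilde_compl_eq_sum_powerset (d : ℕ) (f : Finset ι → ℝ) (X : Finset ι) :
    tilde d f Xᶜ = ∑ W ∈ X.powerset, (-1 : ℝ) ^ #W * supersetSum d f W := by
  have hsign : ∀ V : Finset ι, ∑ W ∈ V.powerset, (-1 : ℝ) ^ #W = if V = ∅ then 1 else 0 := by
    intro V
    exact_mod_cast sum_powerset_neg_one_pow_card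
  simp only [supersetSum, mul_sum]
  rw [sum_comm' (t' := univ.filter fun Z : Finset ι => #Z = d) (s' := fun Z => (X ∩ Z).powerset)]
  · simp only [← sum_mul, hsign, ite_mul, one_mul, zero_mul]
    rw [← sum_filter, filter_filter, tilde]
    refine sum_congr ?_ fun _ _ => rfl
    ext Z
    simp only [mem_filter, mem_powerset, mem_univ, true_and, subset_compl_iff_disjoint_left,
      disjoint_iff_inter_eq_empty]
    tauto
  · intro W Z
    simp only [mem_powerset, mem_filter, mem_univ, true_and, subset_inter_iff]
    tauto

lemma IsHarmonic.tilde_compl {d : ℕ} {f : Finset ι → ℝ} (hf : IsHarmonic d f) (X : Finset ι) :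
    tilde d f Xᶜ = (-1 : ℝ) ^ d * tilde d f X := by
  simp only [tilde_compl_eq_sum_powerset, hf.supersetSum_eq, mul_ite, mul_zero]
  rw [← sum_filter, tilde, mul_sum]
  refine sum_congr rfl fun W hW => ?_
  rw [(mem_filter.1 hW).2]

lemma IsDemimatroidN.s_empty {s t : Finset ι → ℕ} (hD : IsDemimatroidN s t) : s ∅ = 0 :=
  Nat.le_zero.1 (hD.1 (Subset.refl ∅)).1.2

lemma IsDemimatroidN.t_empty {s t : Finset ι → ℕ} (hD : IsDemimatroidN s t) : t ∅ = 0 :=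
  Nat.le_zero.1 (hD.1 (Subset.refl ∅)).2.2

lemma IsDemimatroidN.card_compl_sub {s t : Finset ι → ℕ} (hD : IsDemimatroidN s t)
    (X : Finset ι) : #Xᶜ - s Xᶜ = t univ - t X := by
  have hD2 := hD.2 X
  have htX := (hD.1 (subset_univ X)).2.1
  have hsXc := (hD.1 (Subset.refl Xᶜ)).1.2
  omega

lemma IsDemimatroidN.card_sub_supplement {s t : Finset ι → ℕ} (hD : IsDemimatroidN s t)
    (X : Finset ι) : #X - (s univ - s Xᶜ) = t X := by
  have hD2 := hD.2 X
  have hD2_empty := hD.2 ∅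
  rw [compl_empty, hD.t_empty, card_univ] at hD2_empty
  have hcard := card_add_card_compl X
  have hsXc := (hD.1 (subset_univ Xᶜ)).1.1
  omega

/-- `T(D̄, f; x, y) = (-1)^d (x-1)^{s(E)} (y-1)^{t(E)} T(D, f; x/(x-1), y/(y-1))`,
where `D̄ = (E, s̄, t̄)` with `s̄(X) = s(E) - s(E-X)`, as an identity of rational
functions (i.e. for all `x ≠ 1`, `y ≠ 1`). -/
theorem stmt_14 (s t : Finset ι → ℕ) (hD : IsDemimatroidN s t)
    (d : ℕ) (f : Finset ι → ℝ) (hf : IsHarmonic d f) (x y : ℝ) (hx : x ≠ 1) (hy : y ≠ 1) :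
    harmTutte (fun X => s Finset.univ - s Xᶜ) d f x y
      = (-1 : ℝ) ^ d * (x - 1) ^ (s Finset.univ) * (y - 1) ^ (t Finset.univ) *
          harmTutte s d f (x / (x - 1)) (y / (y - 1)) := by
  have hx₀ : x - 1 ≠ 0 := sub_ne_zero.2 hx
  have hy₀ : y - 1 ≠ 0 := sub_ne_zero.2 hy
  have hxinv : x / (x - 1) - 1 = (x - 1)⁻¹ := by field_simp; ring
  have hyinv : y / (y - 1) - 1 = (y - 1)⁻¹ := by field_simp; ring
  have hsE : s univ - s univᶜ = s univ := by rw [compl_univ, hD.s_empty, Nat.sub_zero]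
  have hsign : (-1 : ℝ) ^ d * (-1) ^ d = 1 := by rw [← mul_pow]; norm_num
  simp only [harmTutte, hxinv, hyinv, hsE, mul_sum]
  refine Fintype.sum_bijective compl compl_involutive.bijective _ _ fun X => ?_
  have hsX := (hD.1 (subset_univ Xᶜ)).1.1
  have htX := (hD.1 (subset_univ X)).2.1
  rw [hD.card_sub_supplement, hD.card_compl_sub, hf.tilde_compl, Nat.sub_sub_self hsX,
    inv_pow_sub₀ hx₀ hsX, inv_pow_sub₀ hy₀ htX]
  symm
  calc _ = (-1) ^ d * (-1) ^ d * tilde d f X * ((x - 1) ^ s univ * ((x - 1) ^ s univ)⁻¹)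
        * (x - 1) ^ s Xᶜ * ((y - 1) ^ t univ * ((y - 1) ^ t univ)⁻¹) * (y - 1) ^ t X := by ring
    _ = _ := by
      rw [hsign, mul_inv_cancel₀ (pow_ne_zero _ hx₀), mul_inv_cancel₀ (pow_ne_zero _ hy₀)]
      ring
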